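/- Let a : ℝ → ℝ be continuously differentiable, 1-periodic, and strictly positive. Then ⟨a⁻³a′·[[a]]⟩ = (1/2)(⟨a⁻¹⟩ − ⟨a⟩⟨a⁻²⟩), and equivalently ⟨a·[[a⁻³a′]]⟩ = −(1/2)(⟨a⁻¹⟩ − ⟨a⟩⟨a⁻²⟩). (These are the closed forms of the homogenization coefficient C₃, up to the factor −1/ρ⁽⁰⁾².) -/

import Mathlib

/-! The function `a⁻³a′` is the derivative of the periodic function `F = -a⁻²/2`. For such an
exact derivative `[[F′]] = F − ⟨F⟩`, and integrating by parts against `[[h]]′ = h − ⟨h⟩`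
(boundary terms cancel by periodicity) gives `⟨F′·[[h]]⟩ = −(⟨hF⟩ − ⟨h⟩⟨F⟩)`. So both sides
reduce, up to sign, to the covariance `⟨aF⟩ − ⟨a⟩⟨F⟩ = −(⟨a⁻¹⟩ − ⟨a⟩⟨a⁻²⟩)/2`. -/

open MeasureTheory Matrix

/-- The mean of a function over one period: `⟨b⟩ = ∫₀¹ b(y) dy`. -/
noncomputable def pmean (b : ℝ → ℝ) : ℝ := ∫ y in (0:ℝ)..1, b y

/-- The fluctuating (mean-zero) part: `{b} = b − ⟨b⟩`. -/
noncomputable def pfluct (b : ℝ → ℝ) : ℝ → ℝ := fun y => b y - pmean b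

/-- The mean-zero primitive of the fluctuating part:
`[[b]](y) = ∫₀^y {b}(ξ) dξ − ∫₀¹ (∫₀^s {b}(ξ) dξ) ds`. -/
noncomputable def pbracket (b : ℝ → ℝ) : ℝ → ℝ :=
  fun y => (∫ ξ in (0:ℝ)..y, pfluct b ξ) - ∫ s in (0:ℝ)..1, (∫ ξ in (0:ℝ)..s, pfluct b ξ)

section Periodic

variable {f h u v u' v' F : ℝ → ℝ}

theorem pmean_const_mul (c : ℝ) (b : ℝ → ℝ) : pmean (fun y => c * b y) = c * pmean b :=
  intervalIntegral.integral_const_mul c b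

theorem pmean_mul_pfluct (hf : Continuous f) (hh : Continuous h) :
    pmean (fun y => f y * pfluct h y) = pmean (fun y => f y * h y) - pmean f * pmean h := by
  have hfh : IntervalIntegrable (fun y => f y * h y) volume 0 1 :=
    (hf.mul hh).intervalIntegrable 0 1
  have hfc : IntervalIntegrable (fun y => f y * pmean h) volume 0 1 :=
    (hf.mul continuous_const).intervalIntegrable 0 1
  simp only [pfluct, mul_sub]
  rw [pmean, intervalIntegral.integral_sub hfh hfc, intervalIntegral.integral_mul_const]
  rfl

theorem pmean_pfluct (hh : IntervalIntegrable h volume 0 1) : pmean (pfluct h) = 0 := by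
  simp [pmean, pfluct, intervalIntegral.integral_sub hh intervalIntegrable_const]

theorem hasDerivAt_pbracket (hh : Continuous h) (y : ℝ) :
    HasDerivAt (pbracket h) (pfluct h y) y :=
  ((hh.sub continuous_const).integral_hasStrictDerivAt 0 y).hasDerivAt.sub_const _

theorem pbracket_one_eq_pbracket_zero (hh : IntervalIntegrable h volume 0 1) :
    pbracket h 1 = pbracket h 0 := by
  simpa [pbracket, pmean] using pmean_pfluct hh

theorem pmean_deriv_mul_eq_neg_pmean_mul_deriv (hu : ∀ x, HasDerivAt u (u' x) x)
    (hv : ∀ x, HasDerivAt v (v' x) x) (hu' : IntervalIntegrable u' volume 0 1)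
    (hv' : IntervalIntegrable v' volume 0 1) (hu1 : u 1 = u 0) (hv1 : v 1 = v 0) :
    pmean (fun y => u' y * v y) = -pmean (fun y => u y * v' y) := by
  rw [pmean, pmean, intervalIntegral.integral_mul_deriv_eq_deriv_mul (fun x _ => hu x)
    (fun x _ => hv x) hu' hv', hu1, hv1]
  ring

theorem pbracket_eq_pfluct_of_hasDerivAt (hF : ∀ x, HasDerivAt F (f x) x) (hf : Continuous f)
    (hF1 : F 1 = F 0) : pbracket f = pfluct F := by
  have hint : ∀ y, ∫ x in (0:ℝ)..y, f x = F y - F 0 := fun y =>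
    intervalIntegral.integral_eq_sub_of_hasDerivAt (fun x _ => hF x) (hf.intervalIntegrable _ _)
  have hmean : pmean f = 0 := by rw [pmean, hint, hF1, sub_self]
  have hFc : Continuous F := continuous_iff_continuousAt.2 fun x => (hF x).continuousAt
  ext y
  simp only [pbracket, pfluct, hmean, sub_zero, hint]
  rw [intervalIntegral.integral_sub (hFc.intervalIntegrable _ _) intervalIntegrable_const]
  simp [pmean]

theorem pmean_deriv_mul_pbracket (hF : ∀ x, HasDerivAt F (f x) x) (hf : Continuous f)
    (hF1 : F 1 = F 0) (hh : Continuous h) :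
    pmean (fun y => f y * pbracket h y) = pmean h * pmean F - pmean (fun y => h y * F y) := by
  have hFc : Continuous F := continuous_iff_continuousAt.2 fun x => (hF x).continuousAt
  rw [pmean_deriv_mul_eq_neg_pmean_mul_deriv hF (hasDerivAt_pbracket hh)
    (hf.intervalIntegrable 0 1) ((hh.sub continuous_const).intervalIntegrable 0 1) hF1
    (pbracket_one_eq_pbracket_zero (hh.intervalIntegrable 0 1)), pmean_mul_pfluct hFc hh]
  simp only [mul_comm (F _)]
  ring

theorem pmean_mul_pbracket_deriv (hF : ∀ x, HasDerivAt F (f x) x) (hf : Continuous f)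
    (hF1 : F 1 = F 0) (hh : Continuous h) :
    pmean (fun y => h y * pbracket f y) = pmean (fun y => h y * F y) - pmean h * pmean F := by
  have hFc : Continuous F := continuous_iff_continuousAt.2 fun x => (hF x).continuousAt
  rw [pbracket_eq_pfluct_of_hasDerivAt hF hf hF1, pmean_mul_pfluct hh hFc]

end Periodic

/-- For `a` continuously differentiable, 1-periodic and strictly positive,
`⟨a⁻³a′·[[a]]⟩ = (1/2)(⟨a⁻¹⟩ − ⟨a⟩⟨a⁻²⟩)` and `⟨a·[[a⁻³a′]]⟩ = −(1/2)(⟨a⁻¹⟩ − ⟨a⟩⟨a⁻²⟩)`. -/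
theorem statement5 (a : ℝ → ℝ) (ha : ContDiff ℝ 1 a) (hper : Function.Periodic a 1)
    (hpos : ∀ y, 0 < a y) :
    pmean (fun y => (a y ^ 3)⁻¹ * deriv a y * pbracket a y)
      = (1/2) * (pmean (fun y => (a y)⁻¹) - pmean a * pmean (fun y => (a y ^ 2)⁻¹)) ∧
    pmean (fun y => a y * pbracket (fun z => (a z ^ 3)⁻¹ * deriv a z) y)
      = -(1/2) * (pmean (fun y => (a y)⁻¹) - pmean a * pmean (fun y => (a y ^ 2)⁻¹)) := by
  have hne : ∀ y, a y ≠ 0 := fun y => (hpos y).ne'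
  have hd : Differentiable ℝ a := ha.differentiable one_ne_zero
  have hF : ∀ y, HasDerivAt (fun y => -(1/2) * (a y ^ 2)⁻¹) ((a y ^ 3)⁻¹ * deriv a y) y := by
    intro y
    refine ((((hd y).hasDerivAt.pow 2).inv (pow_ne_zero 2 (hne y))).const_mul (-(1/2))).congr_deriv
      ?_
    simp only [Pi.pow_apply]
    field_simp [hne y]
    ring
  have hf : Continuous fun y => (a y ^ 3)⁻¹ * deriv a y :=
    ((hd.continuous.pow 3).inv₀ fun y => pow_ne_zero 3 (hne y)).mul (ha.continuous_deriv le_rfl)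
  have hF1 : -(1/2) * (a 1 ^ 2)⁻¹ = -(1/2) * (a 0 ^ 2)⁻¹ := by
    rw [show a 1 = a 0 by simpa using hper 0]
  have hcov : pmean (fun y => a y * (-(1/2) * (a y ^ 2)⁻¹))
        - pmean a * pmean (fun y => -(1/2) * (a y ^ 2)⁻¹)
      = -(1/2) * (pmean (fun y => (a y)⁻¹) - pmean a * pmean (fun y => (a y ^ 2)⁻¹)) := by
    have hpt : ∀ y, a y * (-(1/2) * (a y ^ 2)⁻¹) = -(1/2) * (a y)⁻¹ := fun y => by
      field_simp [hne y]
    simp only [hpt, pmean_const_mul]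
    ring
  constructor
  · rw [pmean_deriv_mul_pbracket hF hf hF1 hd.continuous]
    linarith
  · rw [pmean_mul_pbracket_deriv hF hf hF1 hd.continuous, hcov]
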